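/- arXiv:2004.05391 — 3 statements merged into one kernel-verified Lean document; each statement's English description precedes it below -/
import Mathlib

section
/- The polynomial x⁸ + 8x⁶ + 24x⁴ + 16 is the minimal polynomial over Q of ξ·√2, where ξ is a root of x⁴ + 2x² + 2x + 1; in particular x⁸ + 8x⁶ + 24x⁴ + 16 is irreducible over Q. -/
open Polynomial

private instance fact5 : Fact (Nat.Prime 5) := ⟨by norm_num⟩

private lemma monic_form2 {R : Type*} [CommRing R] {p : R[X]} (hm : p.Monic)
    (h : p.natDegree = 2) : p = X^2 + C (p.coeff 1) * X + C (p.coeff 0) := by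
  ext n
  have h2 : p.coeff 2 = 1 := by simpa [h] using hm.coeff_natDegree
  rcases n with _|_|_|n
  · simp
  · simp
  · simp [coeff_X_pow, h2]
  · have : p.coeff (n+3) = 0 := coeff_eq_zero_of_natDegree_lt (by omega)
    simp [coeff_X_pow, this]

private lemma monic_form4 {R : Type*} [CommRing R] {p : R[X]} (hm : p.Monic)
    (h : p.natDegree = 4) :
    p = X^4 + C (p.coeff 3) * X^3 + C (p.coeff 2) * X^2 + C (p.coeff 1) * X + C (p.coeff 0) := by
  ext n
  have h4 : p.coeff 4 = 1 := by simpa [h] using hm.coeff_natDegree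
  rcases n with _|_|_|_|_|n
  · simp
  · simp
  · simp [coeff_X_pow]
  · simp [coeff_X_pow]
  · simp [coeff_X_pow, h4]
  · have : p.coeff (n+5) = 0 := coeff_eq_zero_of_natDegree_lt (by omega)
    simp [coeff_X_pow, this]

private lemma expand22 {R : Type*} [CommRing R] (a b c d : R) :
    (X^2 + C a * X + C b) * (X^2 + C c * X + C d) =
    X^4 + C (a+c) * X^3 + C (b+d+a*c) * X^2 + C (a*d+b*c) * X + C (b*d) := by
  simp only [C_add, C_mul]; ring

private lemma expand44 {R : Type*} [CommRing R] (a b c d e f g h : R) :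
    (X^4 + C a * X^3 + C b * X^2 + C c * X + C d) *
    (X^4 + C e * X^3 + C f * X^2 + C g * X + C h) =
    X^8 + C (a+e) * X^7 + C (b+f+a*e) * X^6 + C (c+g+a*f+b*e) * X^5
      + C (d+h+a*g+b*f+c*e) * X^4 + C (a*h+b*g+c*f+d*e) * X^3
      + C (b*h+c*g+d*f) * X^2 + C (c*h+d*g) * X + C (d*h) := by
  simp only [C_add, C_mul]; ring

private lemma coeffs_eq4 {R : Type*} [CommRing R] {a3 a2 a1 a0 b3 b2 b1 b0 : R}
    (h : (X^4 + C a3 * X^3 + C a2 * X^2 + C a1 * X + C a0 : R[X])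
       = X^4 + C b3 * X^3 + C b2 * X^2 + C b1 * X + C b0) :
    a3 = b3 ∧ a2 = b2 ∧ a1 = b1 ∧ a0 = b0 := by
  refine ⟨?_, ?_, ?_, ?_⟩
  · simpa [coeff_X_pow] using congrArg (fun q => Polynomial.coeff q 3) h
  · simpa [coeff_X_pow] using congrArg (fun q => Polynomial.coeff q 2) h
  · simpa [coeff_X_pow] using congrArg (fun q => Polynomial.coeff q 1) h
  · simpa [coeff_X_pow] using congrArg (fun q => Polynomial.coeff q 0) h

private lemma coeffs_eq8 {R : Type*} [CommRing R]
    {a7 a6 a5 a4 a3 a2 a1 a0 b7 b6 b5 b4 b3 b2 b1 b0 : R}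
    (h : (X^8 + C a7 * X^7 + C a6 * X^6 + C a5 * X^5 + C a4 * X^4 + C a3 * X^3 + C a2 * X^2
        + C a1 * X + C a0 : R[X])
       = X^8 + C b7 * X^7 + C b6 * X^6 + C b5 * X^5 + C b4 * X^4 + C b3 * X^3 + C b2 * X^2
        + C b1 * X + C b0) :
    a7 = b7 ∧ a6 = b6 ∧ a5 = b5 ∧ a4 = b4 ∧ a3 = b3 ∧ a2 = b2 ∧ a1 = b1 ∧ a0 = b0 := by
  refine ⟨?_, ?_, ?_, ?_, ?_, ?_, ?_, ?_⟩
  · simpa [coeff_X_pow] using congrArg (fun q => Polynomial.coeff q 7) h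
  · simpa [coeff_X_pow] using congrArg (fun q => Polynomial.coeff q 6) h
  · simpa [coeff_X_pow] using congrArg (fun q => Polynomial.coeff q 5) h
  · simpa [coeff_X_pow] using congrArg (fun q => Polynomial.coeff q 4) h
  · simpa [coeff_X_pow] using congrArg (fun q => Polynomial.coeff q 3) h
  · simpa [coeff_X_pow] using congrArg (fun q => Polynomial.coeff q 2) h
  · simpa [coeff_X_pow] using congrArg (fun q => Polynomial.coeff q 1) h
  · simpa [coeff_X_pow] using congrArg (fun q => Polynomial.coeff q 0) h

private lemma q5_natDegree : (X^4 + C 2 * X^2 + C 2 * X + C 1 : (ZMod 5)[X]).natDegree = 4 := by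
  compute_degree!

private lemma q5_monic : (X^4 + C 2 * X^2 + C 2 * X + C 1 : (ZMod 5)[X]).Monic := by
  unfold Monic leadingCoeff
  rw [q5_natDegree]
  compute_degree!

private lemma q5_irred : Irreducible (X^4 + C 2 * X^2 + C 2 * X + C 1 : (ZMod 5)[X]) := by
  rw [q5_monic.irreducible_iff_natDegree']
  constructor
  · intro h
    have h4 := q5_natDegree
    rw [h, natDegree_one] at h4
    exact absurd h4 (by norm_num)
  rintro f g hf hg hfg hmem
  rw [q5_natDegree, Finset.mem_Ioc] at hmem
  obtain ⟨hm1, hm2⟩ := hmem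
  have hdeg : f.natDegree + g.natDegree = 4 := by
    rw [← hf.natDegree_mul hg, hfg, q5_natDegree]
  interval_cases hg1 : g.natDegree
  · have hr := hg.eq_X_add_C hg1
    have hroot : ((-(g.coeff 0))^4 + 2*(-(g.coeff 0))^2 + 2*(-(g.coeff 0)) + 1 : ZMod 5) = 0 := by
      have := congrArg (Polynomial.eval (-(g.coeff 0))) hfg
      rw [hr] at this
      simpa using this.symm
    revert hroot
    generalize g.coeff 0 = r
    revert r
    decide
  · have hf2 : f.natDegree = 2 := by omega
    rw [monic_form2 hf hf2, monic_form2 hg hg1, expand22] at hfg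
    have hfg2 : (X^4 + C (f.coeff 1 + g.coeff 1) * X^3
        + C (f.coeff 0 + g.coeff 0 + f.coeff 1 * g.coeff 1) * X^2
        + C (f.coeff 1 * g.coeff 0 + f.coeff 0 * g.coeff 1) * X
        + C (f.coeff 0 * g.coeff 0) : (ZMod 5)[X])
        = X^4 + C 0 * X^3 + C 2 * X^2 + C 2 * X + C 1 := by
      rw [hfg]; simp
    obtain ⟨e3, e2, e1, e0⟩ := coeffs_eq4 hfg2
    revert e3 e2 e1 e0
    generalize f.coeff 1 = a; generalize f.coeff 0 = b
    generalize g.coeff 1 = c; generalize g.coeff 0 = d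
    revert a b c d
    decide

private lemma qz_monic : (X^4 + C 2 * X^2 + C 2 * X + C 1 : ℤ[X]).Monic := by
  unfold Monic leadingCoeff
  have : (X^4 + C 2 * X^2 + C 2 * X + C 1 : ℤ[X]).natDegree = 4 := by compute_degree!
  rw [this]
  compute_degree!

private lemma qz_irred : Irreducible (X^4 + C 2 * X^2 + C 2 * X + C 1 : ℤ[X]) := by
  apply qz_monic.irreducible_of_irreducible_map (Int.castRingHom (ZMod 5))
  have : (X^4 + C 2 * X^2 + C 2 * X + C 1 : ℤ[X]).map (Int.castRingHom (ZMod 5))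
      = X^4 + C 2 * X^2 + C 2 * X + C 1 := by
    simp [Polynomial.map_add, Polynomial.map_pow, Polynomial.map_mul, map_ofNat]
  rw [this]; exact q5_irred

private lemma qq_monic : (X^4 + C 2 * X^2 + C 2 * X + C 1 : ℚ[X]).Monic := by
  unfold Monic leadingCoeff
  have : (X^4 + C 2 * X^2 + C 2 * X + C 1 : ℚ[X]).natDegree = 4 := by compute_degree!
  rw [this]
  compute_degree!

private lemma qq_irred : Irreducible (X^4 + C 2 * X^2 + C 2 * X + C 1 : ℚ[X]) := by
  have h := (qz_monic.irreducible_iff_irreducible_map_fraction_map (K := ℚ)).mp qz_irred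
  have : (X^4 + C 2 * X^2 + C 2 * X + C 1 : ℤ[X]).map (algebraMap ℤ ℚ)
      = X^4 + C 2 * X^2 + C 2 * X + C 1 := by
    simp [Polynomial.map_add, Polynomial.map_pow, Polynomial.map_mul, map_ofNat]
  rwa [this] at h

private lemma zmod3_no_split : ∀ a b c d e f g h : ZMod 3,
    ¬(a + e = 0 ∧ b + f + a*e = 2 ∧ c + g + a*f + b*e = 0 ∧ d + h + a*g + b*f + c*e = 0 ∧
      a*h + b*g + c*f + d*e = 0 ∧ b*h + c*g + d*f = 0 ∧ c*h + d*g = 0 ∧ d*h = 1) := by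
  decide

private lemma no44 (m n : (ZMod 3)[X]) (hm : m.Monic) (hn : n.Monic)
    (hm4 : m.natDegree = 4) (hn4 : n.natDegree = 4) :
    m * n ≠ X^8 + C 2 * X^6 + C 1 := by
  intro hEq
  rw [monic_form4 hm hm4, monic_form4 hn hn4, expand44] at hEq
  have hEq2 : (X^8 + C (m.coeff 3 + n.coeff 3) * X^7
      + C (m.coeff 2 + n.coeff 2 + m.coeff 3 * n.coeff 3) * X^6
      + C (m.coeff 1 + n.coeff 1 + m.coeff 3 * n.coeff 2 + m.coeff 2 * n.coeff 3) * X^5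
      + C (m.coeff 0 + n.coeff 0 + m.coeff 3 * n.coeff 1 + m.coeff 2 * n.coeff 2
           + m.coeff 1 * n.coeff 3) * X^4
      + C (m.coeff 3 * n.coeff 0 + m.coeff 2 * n.coeff 1 + m.coeff 1 * n.coeff 2
           + m.coeff 0 * n.coeff 3) * X^3
      + C (m.coeff 2 * n.coeff 0 + m.coeff 1 * n.coeff 1 + m.coeff 0 * n.coeff 2) * X^2
      + C (m.coeff 1 * n.coeff 0 + m.coeff 0 * n.coeff 1) * X
      + C (m.coeff 0 * n.coeff 0) : (ZMod 3)[X])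
      = X^8 + C 0 * X^7 + C 2 * X^6 + C 0 * X^5 + C 0 * X^4 + C 0 * X^3 + C 0 * X^2
        + C 0 * X + C 1 := by
    rw [hEq]; simp
  obtain ⟨e7, e6, e5, e4, e3, e2, e1, e0⟩ := coeffs_eq8 hEq2
  exact zmod3_no_split _ _ _ _ _ _ _ _ ⟨e7, e6, e5, e4, e3, e2, e1, e0⟩

private lemma pz_monic : (X^8 + C 8 * X^6 + C 24 * X^4 + C 16 : ℤ[X]).Monic := by
  unfold Monic leadingCoeff
  have : (X^8 + C 8 * X^6 + C 24 * X^4 + C 16 : ℤ[X]).natDegree = 8 := by compute_degree!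
  rw [this]
  compute_degree!

private lemma pq_monic : (X^8 + C 8 * X^6 + C 24 * X^4 + C 16 : ℚ[X]).Monic := by
  unfold Monic leadingCoeff
  have : (X^8 + C 8 * X^6 + C 24 * X^4 + C 16 : ℚ[X]).natDegree = 8 := by compute_degree!
  rw [this]
  compute_degree!

private lemma pq_natDegree : (X^8 + C 8 * X^6 + C 24 * X^4 + C 16 : ℚ[X]).natDegree = 8 := by
  compute_degree!

/-- x⁸ + 8x⁶ + 24x⁴ + 16 is the minimal polynomial over ℚ of ξ√2, where ξ is a
root of x⁴ + 2x² + 2x + 1; in particular it is irreducible over ℚ. -/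
theorem stmt10 (ξ s : ℂ) (hξ : ξ ^ 4 + 2 * ξ ^ 2 + 2 * ξ + 1 = 0) (hs : s ^ 2 = 2) :
    minpoly ℚ (ξ * s) = X ^ 8 + C 8 * X ^ 6 + C 24 * X ^ 4 + C 16 ∧
    Irreducible (X ^ 8 + C 8 * X ^ 6 + C 24 * X ^ 4 + C 16 : ℚ[X]) := by
  set t : ℂ := ξ * s with ht
  -- t is a root of the octic
  have hrootC : t ^ 8 + 8 * t ^ 6 + 24 * t ^ 4 + 16 = 0 := by
    rw [ht]
    linear_combination (ξ^8*(s^6+2*s^4+4*s^2+8) + 8*ξ^6*(s^4+2*s^2+4) + 24*ξ^4*(s^2+2))*hs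
      + (16*(ξ^4+2*ξ^2-2*ξ+1))*hξ
  have hrootQ : Polynomial.aeval t (X^8 + C 8 * X^6 + C 24 * X^4 + C 16 : ℚ[X]) = 0 := by
    simp only [map_add, map_mul, map_pow, aeval_X, aeval_C]
    push_cast
    convert hrootC using 2 <;> norm_num
  have hrootZ : Polynomial.aeval t (X^8 + C 8 * X^6 + C 24 * X^4 + C 16 : ℤ[X]) = 0 := by
    simp only [map_add, map_mul, map_pow, aeval_X, aeval_C]
    push_cast
    convert hrootC using 2 <;> norm_num
  have hint : IsIntegral ℚ t := ⟨_, pq_monic, hrootQ⟩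
  have hintZ : IsIntegral ℤ t := ⟨_, pz_monic, hrootZ⟩
  -- ξ is integral with minimal polynomial the quartic
  have hrootξ : Polynomial.aeval ξ (X^4 + C 2 * X^2 + C 2 * X + C 1 : ℚ[X]) = 0 := by
    simp only [map_add, map_mul, map_pow, aeval_X, aeval_C]
    push_cast
    convert hξ using 2 <;> norm_num
  have hintξ : IsIntegral ℚ ξ := ⟨_, qq_monic, hrootξ⟩
  have hminξ : minpoly ℚ ξ = X^4 + C 2 * X^2 + C 2 * X + C 1 :=
    (minpoly.eq_of_irreducible_of_monic qq_irred hrootξ qq_monic).symm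
  -- ξ lies in ℚ⟮t⟯
  have hξ_eq : ξ = -(1/8 : ℂ) * t^4 - (1/2 : ℂ) * t^2 - (1/2 : ℂ) := by
    rw [ht]
    linear_combination ((1/8 : ℂ)*ξ^4*(s^2+2) + (1/2 : ℂ)*ξ^2)*hs + (1/2 : ℂ)*hξ
  have htmem : t ∈ IntermediateField.adjoin ℚ {t} := IntermediateField.mem_adjoin_simple_self ℚ t
  have hconst : ∀ q : ℚ, (q : ℂ) ∈ IntermediateField.adjoin ℚ {t} := fun q => by
    have : (q : ℂ) = algebraMap ℚ ℂ q := rfl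
    rw [this]
    exact IntermediateField.algebraMap_mem _ q
  have hξmem : ξ ∈ IntermediateField.adjoin ℚ {t} := by
    rw [hξ_eq]
    refine sub_mem (sub_mem (mul_mem ?_ (pow_mem htmem 4)) (mul_mem ?_ (pow_mem htmem 2))) ?_
    · have : (-(1/8 : ℂ)) = ((-(1/8) : ℚ) : ℂ) := by norm_num
      rw [this]; exact hconst _
    · have : ((1/2 : ℂ)) = (((1/2) : ℚ) : ℂ) := by norm_num
      rw [this]; exact hconst _
    · have : ((1/2 : ℂ)) = (((1/2) : ℚ) : ℂ) := by norm_num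
      rw [this]; exact hconst _
  have hle : IntermediateField.adjoin ℚ {ξ} ≤ IntermediateField.adjoin ℚ {t} := by
    rw [IntermediateField.adjoin_simple_le_iff]
    exact hξmem
  -- finrank facts
  have hfrξ : Module.finrank ℚ (IntermediateField.adjoin ℚ {ξ}) = 4 := by
    rw [IntermediateField.adjoin.finrank hintξ, hminξ]
    compute_degree!
  have hfrt : Module.finrank ℚ (IntermediateField.adjoin ℚ {t}) = (minpoly ℚ t).natDegree :=
    IntermediateField.adjoin.finrank hint
  have hdvd4 : 4 ∣ (minpoly ℚ t).natDegree := by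
    rw [← hfrt, ← hfrξ]
    exact dvd_of_mul_right_eq _ (IntermediateField.finrank_bot_mul_relfinrank hle)
  -- minpoly divides the octic
  have hdvd : minpoly ℚ t ∣ (X^8 + C 8 * X^6 + C 24 * X^4 + C 16 : ℚ[X]) :=
    minpoly.dvd ℚ t hrootQ
  have hPne : (X^8 + C 8 * X^6 + C 24 * X^4 + C 16 : ℚ[X]) ≠ 0 := pq_monic.ne_zero
  have hdle : (minpoly ℚ t).natDegree ≤ 8 := by
    have := Polynomial.natDegree_le_of_dvd hdvd hPne
    rwa [pq_natDegree] at this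
  -- degree is not 4, using reduction mod 3
  have hne4 : (minpoly ℚ t).natDegree ≠ 4 := by
    intro h4
    have hmzmonic : (minpoly ℤ t).Monic := minpoly.monic hintZ
    have hEqFF : minpoly ℚ t = (minpoly ℤ t).map (algebraMap ℤ ℚ) :=
      minpoly.isIntegrallyClosed_eq_field_fractions ℚ ℂ hintZ
    have hmz4 : (minpoly ℤ t).natDegree = 4 := by
      rw [hEqFF, natDegree_map_eq_of_injective (algebraMap ℤ ℚ).injective_int] at h4
      exact h4
    have hdvdZ : minpoly ℤ t ∣ (X^8 + C 8 * X^6 + C 24 * X^4 + C 16 : ℤ[X]) :=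
      minpoly.isIntegrallyClosed_dvd hintZ hrootZ
    obtain ⟨nz, hnz⟩ := hdvdZ
    have hnzmonic : nz.Monic := hmzmonic.of_mul_monic_left (hnz ▸ pz_monic)
    have hnz4 : nz.natDegree = 4 := by
      have h8 : (X^8 + C 8 * X^6 + C 24 * X^4 + C 16 : ℤ[X]).natDegree = 8 := by compute_degree!
      have := hmzmonic.natDegree_mul hnzmonic
      rw [← hnz, h8, hmz4] at this
      omega
    -- map to ZMod 3
    have hmap := congrArg (Polynomial.map (Int.castRingHom (ZMod 3))) hnz
    rw [Polynomial.map_mul] at hmap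
    have hPmap : (X^8 + C 8 * X^6 + C 24 * X^4 + C 16 : ℤ[X]).map (Int.castRingHom (ZMod 3))
        = X^8 + C 2 * X^6 + C 1 := by
      simp only [Polynomial.map_add, Polynomial.map_mul, Polynomial.map_pow, Polynomial.map_X,
        Polynomial.map_C]
      have h8 : ((8 : ℤ) : ZMod 3) = 2 := by decide
      have h24 : ((24 : ℤ) : ZMod 3) = 0 := by decide
      have h16 : ((16 : ℤ) : ZMod 3) = 1 := by decide
      rw [show (Int.castRingHom (ZMod 3)) 8 = 2 from h8,
        show (Int.castRingHom (ZMod 3)) 24 = 0 from h24,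
        show (Int.castRingHom (ZMod 3)) 16 = 1 from h16]
      simp
    rw [hPmap] at hmap
    exact no44 _ _ (hmzmonic.map _) (hnzmonic.map _)
      (by rw [hmzmonic.natDegree_map]; exact hmz4)
      (by rw [hnzmonic.natDegree_map]; exact hnz4) hmap.symm
  have hd8 : (minpoly ℚ t).natDegree = 8 := by
    have hpos : 0 < (minpoly ℚ t).natDegree := minpoly.natDegree_pos hint
    obtain ⟨k, hk⟩ := hdvd4
    rw [hk] at hdle hne4 hpos ⊢
    omega
  -- conclude equality
  have hmain : minpoly ℚ t = X^8 + C 8 * X^6 + C 24 * X^4 + C 16 := by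
    obtain ⟨c, hc⟩ := hdvd
    have hcne : c ≠ 0 := by
      intro h0
      rw [h0, mul_zero] at hc
      exact hPne hc
    have hmne : minpoly ℚ t ≠ 0 := minpoly.ne_zero hint
    have hcdeg : c.natDegree = 0 := by
      have := Polynomial.natDegree_mul hmne hcne
      rw [← hc, pq_natDegree, hd8] at this
      omega
    have hclead : c.coeff 0 = 1 := by
      have hl := congrArg Polynomial.leadingCoeff hc
      rw [Polynomial.leadingCoeff_mul, (minpoly.monic hint).leadingCoeff, one_mul,
        pq_monic.leadingCoeff] at hl
      rw [Polynomial.leadingCoeff, hcdeg] at hl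
      exact hl.symm
    have hc1 : c = 1 := by
      rw [Polynomial.eq_C_of_natDegree_eq_zero hcdeg, hclead, map_one]
    rw [hc, hc1, mul_one]
  exact ⟨by rw [← ht] at *; exact hmain, hmain ▸ minpoly.irreducible hint⟩
end

section
/- In the ring of integers of K = Q(ξ, √19), where ξ³ = 3ξ − 17 and ω = √19, the element α = (2ω + ξω − ξ²ω)/19 is an algebraic integer. -/
/-- In K = ℚ(ξ, √19), where ξ is a root of x³ − 3x + 17 and ω = √19,
the element α = (2ω + ξω − ξ²ω)/19 is an algebraic integer. -/
theorem stmt15 (ξ ω : ℂ) (hξ : ξ ^ 3 - 3 * ξ + 17 = 0) (hω : ω ^ 2 = 19) :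
    IsIntegral ℤ ((2 * ω + ξ * ω - ξ ^ 2 * ω) / 19) := by
  set α : ℂ := (2 * ω + ξ * ω - ξ ^ 2 * ω) / 19 with hα
  have h2 : α ^ 2 = 2 - ξ := by
    rw [hα]
    field_simp
    linear_combination ((2 + ξ - ξ ^ 2) ^ 2) * hω + (19 * (ξ - 2)) * hξ
  refine ⟨Polynomial.X ^ 6 - Polynomial.C 6 * Polynomial.X ^ 4 +
      Polynomial.C 9 * Polynomial.X ^ 2 - Polynomial.C 19, ?_, ?_⟩
  · monicity!
  · simp only [Polynomial.eval₂_sub, Polynomial.eval₂_add, Polynomial.eval₂_mul,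
      Polynomial.eval₂_pow, Polynomial.eval₂_X, Polynomial.eval₂_C]
    simp only [eq_intCast]
    push_cast
    linear_combination (α ^ 4 + α ^ 2 * (2 - ξ) + (2 - ξ) ^ 2 - 6 * α ^ 2 - 6 * (2 - ξ) + 9) * h2 - hξ
end

section
/- Let ξ be a root of x⁴ + 2x² + 2x + 1 and ω = √2. The elements α₁ = (2ω + 2ωξ²)/4 = ω(1+ξ²)/2 and α₂ = (4ω + 2ωξ + 2ωξ³)/4 = ω(2 + ξ + ξ³)/2 are algebraic integers in K = Q(ξ, √2). -/
open Polynomial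

/-- In K = ℚ(ξ, √2), where ξ is a root of x⁴ + 2x² + 2x + 1 and ω = √2, the elements
α₁ = (2ω + 2ωξ²)/4 = ω(1+ξ²)/2 and α₂ = (4ω + 2ωξ + 2ωξ³)/4 = ω(2+ξ+ξ³)/2
are algebraic integers. -/
theorem stmt16 (ξ ω : ℂ) (hξ : ξ ^ 4 + 2 * ξ ^ 2 + 2 * ξ + 1 = 0) (hω : ω ^ 2 = 2) :
    IsIntegral ℤ ((2 * ω + 2 * ω * ξ ^ 2) / 4) ∧
    IsIntegral ℤ ((4 * ω + 2 * ω * ξ + 2 * ω * ξ ^ 3) / 4) := by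
  constructor
  · set a : ℂ := (2 * ω + 2 * ω * ξ ^ 2) / 4 with ha
    refine ⟨X ^ 8 + 2 * X ^ 4 - 2 * X ^ 2 + 1, ?_, ?_⟩
    · monicity!
    · have h1 : a ^ 2 = -ξ := by
        rw [ha]
        linear_combination ((1 + ξ ^ 2) ^ 2 / 4) * hω + (1 / 2) * hξ
      simp only [eval₂_add, eval₂_sub, eval₂_mul, eval₂_pow, eval₂_X, eval₂_one,
        eval₂_ofNat]
      linear_combination hξ + (a ^ 6 - a ^ 4 * ξ + a ^ 2 * ξ ^ 2 - ξ ^ 3 + 2 * (a ^ 2 - ξ) - 2) * h1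
  · set b : ℂ := (4 * ω + 2 * ω * ξ + 2 * ω * ξ ^ 3) / 4 with hb
    refine ⟨X ^ 8 - 2 * X ^ 6 + 2 * X ^ 4 + 1, ?_, ?_⟩
    · monicity!
    · have h2 : b ^ 2 = ξ ^ 3 + 2 * ξ + 2 := by
        rw [hb]
        linear_combination ((2 + ξ + ξ ^ 3) ^ 2 / 4) * hω + (ξ ^ 2 / 2) * hξ
      simp only [eval₂_add, eval₂_sub, eval₂_mul, eval₂_pow, eval₂_X, eval₂_one,
        eval₂_ofNat]
      have hβ : (ξ ^ 3 + 2 * ξ + 2) ^ 4 - 2 * (ξ ^ 3 + 2 * ξ + 2) ^ 3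
          + 2 * (ξ ^ 3 + 2 * ξ + 2) ^ 2 + 1 = 0 := by
        linear_combination (ξ ^ 8 + 6 * ξ ^ 6 + 4 * ξ ^ 5 + 11 * ξ ^ 4 + 16 * ξ ^ 3
          + 10 * ξ ^ 2 + 14 * ξ + 9) * hξ
      linear_combination hβ + (b ^ 6 + b ^ 4 * (ξ ^ 3 + 2 * ξ + 2)
        + b ^ 2 * (ξ ^ 3 + 2 * ξ + 2) ^ 2 + (ξ ^ 3 + 2 * ξ + 2) ^ 3
        - 2 * (b ^ 4 + b ^ 2 * (ξ ^ 3 + 2 * ξ + 2) + (ξ ^ 3 + 2 * ξ + 2) ^ 2)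
        + 2 * (b ^ 2 + (ξ ^ 3 + 2 * ξ + 2))) * h2
end
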